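/- arXiv:2112.00701 — 3 statements merged into one kernel-verified Lean document; each statement's English description precedes it below -/
import Mathlib

section
/- Let f be holomorphic on a neighborhood of a compact set, with a conformal metric ρ(z)|dz| where ρ(z) = Σ_{k=0}^{N-1} κ^{-k/N} |(f^k)'(z)| and |(f^N)'| ≥ κ > 1 on the domain. Then ρ(f(z))·|f'(z)| ≥ κ^{1/N} ρ(z) for all z in the domain, i.e. f is uniformly expanding for the metric ρ. -/
open Real

/-! The weights `κ^{-k/N}` are chosen so that composing with `f` shifts the sum by one term:
`ρ(f z)·|f'(z)| = Σ_{k<N} κ^{-k/N} |(f^{k+1})'(z)|` by the chain rule, while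
`κ^{1/N} ρ(z) = κ^{1/N} + Σ_{1≤k<N} κ^{-(k-1)/N} |(f^k)'(z)|`. The two sums agree except that
the term `κ^{1/N}·|(f^0)'(z)| = κ^{1/N}` is traded for `κ^{-(N-1)/N} |(f^N)'(z)| ≥ κ^{1/N}`. -/

theorem deriv_iterate_succ_apply {𝕜 : Type*} [NontriviallyNormedField 𝕜] {f : 𝕜 → 𝕜} {z : 𝕜}
    (k : ℕ) (hfk : DifferentiableAt 𝕜 f^[k] (f z)) (hf : DifferentiableAt 𝕜 f z) :
    deriv f^[k + 1] z = deriv f^[k] (f z) * deriv f z := by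
  rw [Function.iterate_succ, deriv_comp z hfk hf]

theorem rpow_one_div_mul_sum_le_sum_shift {κ : ℝ} (hκ : 0 < κ) {N : ℕ} {a : ℕ → ℝ}
    (h : κ * a 0 ≤ a N) :
    κ ^ ((1 : ℝ) / N) * ∑ k ∈ Finset.range N, κ ^ (-(k : ℝ) / N) * a k ≤
      ∑ k ∈ Finset.range N, κ ^ (-(k : ℝ) / N) * a (k + 1) := by
  obtain _ | M := N
  · simp
  have h_shift (k : ℕ) :
      κ ^ ((1 : ℝ) / ↑(M + 1)) * (κ ^ (-((k + 1 : ℕ) : ℝ) / ↑(M + 1)) * a (k + 1)) =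
        κ ^ (-(k : ℝ) / ↑(M + 1)) * a (k + 1) := by
    rw [← mul_assoc, ← rpow_add hκ]
    congr 2
    push_cast
    ring
  have h_last : κ ^ ((1 : ℝ) / ↑(M + 1)) = κ ^ (-(M : ℝ) / ↑(M + 1)) * κ := by
    rw [← rpow_add_one hκ.ne']
    congr 1
    field_simp
    push_cast
    ring
  rw [Finset.mul_sum, Finset.sum_range_succ', Finset.sum_range_succ]
  simp only [h_shift]
  refine add_le_add le_rfl ?_
  calc κ ^ ((1 : ℝ) / ↑(M + 1)) * (κ ^ (-((0 : ℕ) : ℝ) / ↑(M + 1)) * a 0)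
      = κ ^ (-(M : ℝ) / ↑(M + 1)) * (κ * a 0) := by
        rw [Nat.cast_zero, neg_zero, zero_div, rpow_zero, one_mul, h_last, mul_assoc]
    _ ≤ κ ^ (-(M : ℝ) / ↑(M + 1)) * a (M + 1) := by gcongr

/-- Expansion in the Lyapunov metric: if `f` is holomorphic on `V`, maps `V` to itself, and
`|(f^N)'| ≥ κ > 1` on `V`, then the conformal density
`ρ(z) = Σ_{k=0}^{N-1} κ^{-k/N} |(f^k)'(z)|` satisfies `ρ(f z)·|f'(z)| ≥ κ^{1/N} ρ(z)` on `V`. -/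
theorem stmt_3 (V : Set ℂ) (hV : IsOpen V) (f : ℂ → ℂ)
    (hf : DifferentiableOn ℂ f V) (hmaps : Set.MapsTo f V V)
    (N : ℕ) (κ : ℝ) (hκ : 1 < κ)
    (hexp : ∀ z ∈ V, κ ≤ ‖deriv (f^[N]) z‖)
    (ρ : ℂ → ℝ)
    (hρ : ∀ z, ρ z = ∑ k ∈ Finset.range N, κ ^ (-(k : ℝ) / N) * ‖deriv (f^[k]) z‖) :
    ∀ z ∈ V, κ ^ ((1 : ℝ) / N) * ρ z ≤ ρ (f z) * ‖deriv f z‖ := by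
  intro z hz
  have h_diff (k : ℕ) {w : ℂ} (hw : w ∈ V) : DifferentiableAt ℂ f^[k] w :=
    (hf.iterate hmaps k).differentiableAt (hV.mem_nhds hw)
  have h_pullback : ρ (f z) * ‖deriv f z‖ =
      ∑ k ∈ Finset.range N, κ ^ (-(k : ℝ) / N) * ‖deriv f^[k + 1] z‖ := by
    rw [hρ, Finset.sum_mul]
    refine Finset.sum_congr rfl fun k _ => ?_
    rw [deriv_iterate_succ_apply k (h_diff k (hmaps hz)) (h_diff 1 hz), norm_mul, mul_assoc]
  rw [h_pullback, hρ]
  exact rpow_one_div_mul_sum_le_sum_shift (zero_lt_one.trans hκ) (by simpa using hexp z hz)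
end

section
/- Gibbs estimate from transfer-operator invariance: suppose μ is a probability measure on J with L_φ* μ = e^{P} μ for the transfer operator L_φ of an expanding Markov map f with inverse branches, and φ has exponentially decreasing variations with constant C (i.e. sup over n-cylinders P_a of the oscillation of S_n φ is ≤ C). Then there exists C₀ ≥ 1 such that for every n, every admissible word a of length n, and every x ∈ P_a: C₀^{-1} e^{S_n φ(x) − nP} ≤ μ(P_a) ≤ C₀ e^{S_n φ(x) − nP}. -/
open MeasureTheory Finset

/-- The transfer operator `L_φ h (x) = Σ_{f(y)=x} e^{φ(y)} h(y)` of a finite-to-one map. -/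
noncomputable def transferOp {X : Type*} (f : X → X) (hfin : ∀ x, (f ⁻¹' {x}).Finite)
    (φ : X → ℝ) (h : X → ℝ) (x : X) : ℝ :=
  ∑ y ∈ (hfin x).toFinset, Real.exp (φ y) * h y

/-- The Birkhoff sum `S_n φ = Σ_{k<n} φ ∘ f^k`. -/
def birkhoff {X : Type*} (f : X → X) (φ : X → ℝ) (n : ℕ) (x : X) : ℝ :=
  ∑ k ∈ range n, φ (f^[k] x)

/-- The cylinder set of a word: `{x : f^k x ∈ P_{w k} for all k}`. -/
def cylinder {X A : Type*} (f : X → X) (Pa : A → Set X) {m : ℕ} (w : Fin m → A) : Set X :=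
  {x | ∀ j : Fin m, f^[(j : ℕ)] x ∈ Pa (w j)}

lemma birkhoff_succ' {X : Type*} (f : X → X) (φ : X → ℝ) (m : ℕ) (y : X) :
    birkhoff f φ (m + 1) y = φ y + birkhoff f φ m (f y) := by
  unfold birkhoff
  rw [Finset.sum_range_succ']
  simp [Function.iterate_succ_apply, add_comm]

lemma cyl_step {X A : Type*} (f : X → X) (Pa : A → Set X) {m : ℕ} (v : Fin (m + 1) → A)
    {y : X} (hy : y ∈ cylinder f Pa v) : f y ∈ cylinder f Pa (v ∘ Fin.succ) := by
  intro j
  have := hy j.succ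
  simpa [Function.iterate_succ_apply, Fin.val_succ] using this

/-- Gibbs estimate from transfer-operator invariance: if `L_φ^* μ = e^P μ` for an expanding
Markov map with inverse branches, and `φ` has oscillation at most `C` on every admissible
cylinder, then there is `C₀ ≥ 1` with
`C₀⁻¹ e^{S_n φ(x) − nP} ≤ μ(P_w) ≤ C₀ e^{S_n φ(x) − nP}` for every admissible word `w` of
length `n` and every `x` in the cylinder `P_w`. -/
theorem stmt_7 {X : Type*} [MeasurableSpace X]
    (μ : Measure X) [IsProbabilityMeasure μ]
    (f : X → X) (hf : Measurable f) (hfin : ∀ x, (f ⁻¹' {x}).Finite)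
    {A : Type*} (Pa : A → Set X) (hPa : ∀ a, MeasurableSet (Pa a))
    (Adm : ∀ {n : ℕ}, (Fin n → A) → Prop)
    (φ : X → ℝ) (hφmeas : Measurable φ) (P C : ℝ) (hC : 0 ≤ C)
    -- the equilibrium measure is an eigenmeasure of the transfer operator
    (hμ : ∀ g : X → ℝ, Measurable g → Integrable g μ →
      ∫ x, transferOp f hfin φ g x ∂μ = Real.exp P * ∫ x, g x ∂μ)
    -- admissibility is stable under removing the first letter
    (htail : ∀ n (w : Fin (n + 1) → A), Adm w → Adm (w ∘ Fin.succ))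
    -- Markov branch property: over each point of a sub-cylinder there is exactly one preimage
    -- in the extended cylinder
    (hbranch : ∀ n (w : Fin (n + 1) → A), Adm w →
      ∀ x ∈ cylinder f Pa (w ∘ Fin.succ), ∃! y, f y = x ∧ y ∈ cylinder f Pa w)
    -- exponentially decreasing variations: bounded oscillation of Birkhoff sums on cylinders
    (hvar : ∀ n, 1 ≤ n → ∀ w : Fin n → A, Adm w →
      ∀ x ∈ cylinder f Pa w, ∀ y ∈ cylinder f Pa w,
        |birkhoff f φ n x - birkhoff f φ n y| ≤ C) :
    ∃ C₀ : ℝ, 1 ≤ C₀ ∧ ∀ n, 1 ≤ n → ∀ w : Fin n → A, Adm w →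
      ∀ x ∈ cylinder f Pa w,
        C₀⁻¹ * Real.exp (birkhoff f φ n x - n * P) ≤ (μ (cylinder f Pa w)).toReal ∧
        (μ (cylinder f Pa w)).toReal ≤ C₀ * Real.exp (birkhoff f φ n x - n * P) := by
  classical
  -- measurability of cylinders
  have hcylmeas : ∀ {m : ℕ} (v : Fin m → A), MeasurableSet (cylinder f Pa v) := by
    intro m v
    have : cylinder f Pa v = ⋂ j : Fin m, f^[(j : ℕ)] ⁻¹' Pa (v j) := by
      ext x
      simp only [Set.mem_iInter, Set.mem_preimage]
      exact Iff.rfl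
    rw [this]
    exact MeasurableSet.iInter fun j => (hf.iterate (j : ℕ)) (hPa (v j))
  have hbirk : ∀ m : ℕ, Measurable (birkhoff f φ m) := by
    intro m
    unfold birkhoff
    exact Finset.measurable_sum _ fun k _ => hφmeas.comp (hf.iterate k)
  have hgmeas : ∀ {m : ℕ} (v : Fin m → A),
      Measurable ((cylinder f Pa v).indicator fun z => Real.exp (-(birkhoff f φ m z))) :=
    fun {m} v => (Measurable.neg (hbirk m)).exp.indicator (hcylmeas v)
  have hgint : ∀ (m : ℕ) (v : Fin m → A), Adm v → 1 ≤ m →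
      Integrable ((cylinder f Pa v).indicator fun z => Real.exp (-(birkhoff f φ m z))) μ := by
    intro m v hv hm
    rcases Set.eq_empty_or_nonempty (cylinder f Pa v) with hE | ⟨z, hz⟩
    · rw [hE]; simp
    · refine (integrable_const (Real.exp (C - birkhoff f φ m z))).mono'
        (hgmeas v).aestronglyMeasurable ?_
      filter_upwards with x
      rw [Real.norm_eq_abs]
      by_cases hx : x ∈ cylinder f Pa v
      · rw [Set.indicator_of_mem hx, abs_of_nonneg (Real.exp_pos _).le, Real.exp_le_exp]
        have := abs_le.mp (hvar m hm v hv x hx z hz)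
        linarith [this.1, this.2]
      · rw [Set.indicator_of_notMem hx]
        simp [(Real.exp_pos _).le]
  -- the key induction
  have key : ∀ (m : ℕ) (v : Fin m → A), Adm v →
      ∫ x, (cylinder f Pa v).indicator (fun z => Real.exp (-(birkhoff f φ m z))) x ∂μ
        = Real.exp (-((m : ℝ) * P)) := by
    intro m
    induction m with
    | zero =>
      intro v _
      have h1 : cylinder f Pa v = Set.univ := by
        ext x
        exact iff_of_true (fun j => j.elim0) trivial
      rw [h1]
      simp [birkhoff]
    | succ m ih =>
      intro v hv
      set g : X → ℝ :=
        (cylinder f Pa v).indicator (fun z => Real.exp (-(birkhoff f φ (m + 1) z))) with hg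
      set g' : X → ℝ :=
        (cylinder f Pa (v ∘ Fin.succ)).indicator (fun z => Real.exp (-(birkhoff f φ m z))) with hg'
      have hLg : ∀ x, transferOp f hfin φ g x = g' x := by
        intro x
        rw [transferOp]
        have hterm : ∀ y ∈ (hfin x).toFinset, Real.exp (φ y) * g y =
            if y ∈ cylinder f Pa v then Real.exp (-(birkhoff f φ m x)) else 0 := by
          intro y hy
          have hfy : f y = x := by simpa using (hfin x).mem_toFinset.mp hy
          by_cases hyB : y ∈ cylinder f Pa v
          · rw [if_pos hyB, hg]
            simp only [Set.indicator_of_mem hyB]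
            rw [← Real.exp_add]
            congr 1
            rw [birkhoff_succ' f φ m y, hfy]
            ring
          · rw [if_neg hyB, hg]
            simp [Set.indicator_of_notMem hyB]
        rw [Finset.sum_congr rfl hterm, ← Finset.sum_filter, Finset.sum_const, nsmul_eq_mul]
        by_cases hx : x ∈ cylinder f Pa (v ∘ Fin.succ)
        · obtain ⟨y₀, ⟨hfy₀, hy₀B⟩, huniq⟩ := hbranch m v hv x hx
          have hT : ((hfin x).toFinset.filter (· ∈ cylinder f Pa v)) = {y₀} := by
            ext y
            simp only [Finset.mem_filter, (hfin x).mem_toFinset, Set.mem_preimage,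
              Set.mem_singleton_iff, Finset.mem_singleton]
            constructor
            · rintro ⟨h1, h2⟩; exact huniq y ⟨h1, h2⟩
            · rintro rfl; exact ⟨hfy₀, hy₀B⟩
          rw [hT, hg']
          simp [Set.indicator_of_mem hx]
        · have hT : ((hfin x).toFinset.filter (· ∈ cylinder f Pa v)) = ∅ := by
            ext y
            simp only [Finset.mem_filter, (hfin x).mem_toFinset, Set.mem_preimage,
              Set.mem_singleton_iff, Finset.notMem_empty, iff_false, not_and]
            intro h1 h2
            exact hx (h1 ▸ cyl_step f Pa v h2)
          rw [hT, hg']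
          simp [Set.indicator_of_notMem hx]
      have h1 := hμ g (hgmeas v) (hgint (m + 1) v hv (by omega))
      rw [show (fun x => transferOp f hfin φ g x) = g' from funext hLg] at h1
      rw [ih (v ∘ Fin.succ) (htail m v hv)] at h1
      have h2 : Real.exp P * (∫ x, g x ∂μ) =
          Real.exp P * Real.exp (-(((m : ℝ) + 1) * P)) := by
        rw [← h1, ← Real.exp_add]
        ring_nf
      have h3 := mul_left_cancel₀ (Real.exp_ne_zero P) h2
      rw [h3]
      push_cast
      ring_nf
  -- conclusion
  refine ⟨Real.exp C, Real.one_le_exp hC, ?_⟩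
  intro n hn w hw x hx
  have hkey := key n w hw
  set s := birkhoff f φ n x with hs
  have hmeasB := hcylmeas w
  have hμfin : μ (cylinder f Pa w) ≠ ⊤ := measure_ne_top μ _
  -- upper comparison function
  have hup : ∫ z, (cylinder f Pa w).indicator (fun z => Real.exp (-(birkhoff f φ n z))) z ∂μ
      ≤ ∫ z, (cylinder f Pa w).indicator (fun _ => Real.exp (C - s)) z ∂μ := by
    refine integral_mono_of_nonneg ?_ ?_ ?_
    · filter_upwards with z
      exact Set.indicator_nonneg (fun _ _ => (Real.exp_pos _).le) z
    · exact (integrable_const _).indicator hmeasB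
    · filter_upwards with z
      by_cases hz : z ∈ cylinder f Pa w
      · rw [Set.indicator_of_mem hz, Set.indicator_of_mem hz, Real.exp_le_exp]
        have := abs_le.mp (hvar n hn w hw z hz x hx)
        linarith [this.1, this.2]
      · rw [Set.indicator_of_notMem hz, Set.indicator_of_notMem hz]
  have hlo : ∫ z, (cylinder f Pa w).indicator (fun _ => Real.exp (-C - s)) z ∂μ
      ≤ ∫ z, (cylinder f Pa w).indicator (fun z => Real.exp (-(birkhoff f φ n z))) z ∂μ := by
    refine integral_mono_of_nonneg ?_ (hgint n w hw hn) ?_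
    · filter_upwards with z
      exact Set.indicator_nonneg (fun _ _ => (Real.exp_pos _).le) z
    · filter_upwards with z
      by_cases hz : z ∈ cylinder f Pa w
      · rw [Set.indicator_of_mem hz, Set.indicator_of_mem hz, Real.exp_le_exp]
        have := abs_le.mp (hvar n hn w hw z hz x hx)
        linarith [this.1, this.2]
      · rw [Set.indicator_of_notMem hz, Set.indicator_of_notMem hz]
  rw [integral_indicator_const _ hmeasB, smul_eq_mul] at hup hlo
  rw [hkey] at hup hlo
  have hμnn : (0 : ℝ) ≤ (μ (cylinder f Pa w)).toReal := ENNReal.toReal_nonneg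
  constructor
  · rw [← Real.exp_neg, ← Real.exp_add]
    calc Real.exp (-C + (s - (n : ℝ) * P))
        = Real.exp (-((n : ℝ) * P)) * Real.exp (-(C - s)) := by
          rw [← Real.exp_add]; congr 1; ring
      _ ≤ ((μ (cylinder f Pa w)).toReal * Real.exp (C - s)) * Real.exp (-(C - s)) :=
          mul_le_mul_of_nonneg_right hup (Real.exp_pos _).le
      _ = (μ (cylinder f Pa w)).toReal := by
          rw [mul_assoc, ← Real.exp_add]; simp
  · rw [← Real.exp_add]
    calc (μ (cylinder f Pa w)).toReal
        = ((μ (cylinder f Pa w)).toReal * Real.exp (-C - s)) * Real.exp (C + s) := by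
          rw [mul_assoc, ← Real.exp_add]; simp
      _ ≤ Real.exp (-((n : ℝ) * P)) * Real.exp (C + s) :=
          mul_le_mul_of_nonneg_right hlo (Real.exp_pos _).le
      _ = Real.exp (C + (s - (n : ℝ) * P)) := by
          rw [← Real.exp_add]; congr 1; ring
end

section
/- Sum–product estimate with polynomially growing constants: fix 0 < γ < 1; there exist ε₁ > 0 and k ∈ ℕ such that for all η ∈ ℂ with |η| large, all 1 < R < |η|^{ε₁}, and all Borel measures λ₁, …, λ_k supported on {R^{-1} ≤ |z| ≤ R} with total mass ≤ R each satisfying the projective non-concentration property sup_{a,θ} λ_j{z : |Re(e^{iθ}z) − a| ≤ σ} ≤ σ^γ for all σ ∈ [|η|^{-2}, |η|^{-ε₁}], one has |∫ exp(2πi Re(η z₁⋯z_k)) dλ₁(z₁)⋯dλ_k(z_k)| ≤ c|η|^{-ε₁} with c depending only on γ. -/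
/-!
Split each `λ_j` along the dyadic annuli `2^(r-1) < |z| ≤ 2^r` with `2^r` between `R⁻¹` and
`2R`; by multilinearity the integral is a sum of at most `(4R)^k` pieces. On the piece indexed
by `(r_j)`, the substitution `z_j ↦ 2^(-r_j) z_j` followed by division of each measure by `R`
yields measures supported in `{1/2 ≤ |z| ≤ 2}`, of mass at most `1` and non-concentrated with
constant `2`, at the frequency `η' = η ∏ 2^(r_j)`, which satisfies `|η'| ≥ |η| (2R)^(-k)`. The
black box bounds the piece by `R^k C₁ |η'|^(-ε₂)`. With `u = |η|^ε₁ > R` and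
`ε₁ = ε₂ / (4k + 2)`, so that `|η|^ε₂ = u^(4k+2)`, every piece is `O(u^(-(k+2)))` while there are
`O(u^k)` pieces.
-/

open MeasureTheory Real Set Function
open scoped ENNReal NNReal

theorem MeasureTheory.Measure.pi_smul {ι α : Type*} [Fintype ι] [MeasurableSpace α] (c : ℝ≥0)
    (μ : ι → Measure α) [∀ i, SigmaFinite (μ i)] :
    Measure.pi (fun i => c • μ i) = c ^ Fintype.card ι • Measure.pi μ := by
  refine Measure.pi_eq fun s _ => ?_
  rw [Measure.smul_apply, Measure.pi_pi, ENNReal.smul_def, smul_eq_mul, ENNReal.coe_pow,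
    ← Finset.card_univ, ← Finset.prod_const, ← Finset.prod_mul_distrib]
  simp only [Measure.smul_apply, ENNReal.smul_def, smul_eq_mul]

theorem MeasureTheory.integral_pi_eq_sum_restrict {ι α κ E : Type*} [Fintype ι] [DecidableEq ι]
    [MeasurableSpace α] [NormedAddCommGroup E] [NormedSpace ℝ E] {μ : ι → Measure α}
    [∀ i, SigmaFinite (μ i)] {S : Finset κ} {A : κ → Set α} (hA : ∀ t, MeasurableSet (A t))
    (hdisj : Pairwise (Disjoint on A)) (hcover : ∀ i, ∀ᵐ x ∂μ i, ∃ t ∈ S, x ∈ A t)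
    {f : (ι → α) → E} (hf : Integrable f (Measure.pi μ)) :
    ∫ x, f x ∂Measure.pi μ =
      ∑ ρ ∈ Fintype.piFinset fun _ => S,
        ∫ x, f x ∂Measure.pi fun i => (μ i).restrict (A (ρ i)) := by
  classical
  have hcover' : ∀ᵐ x ∂Measure.pi μ,
      x ∈ ⋃ ρ ∈ Fintype.piFinset (fun _ => S), univ.pi fun i => A (ρ i) := by
    filter_upwards [ae_all_iff.2 fun i => Measure.tendsto_eval_ae_ae.eventually (hcover i)]
      with x hx
    choose ρ hρS hρA using hx
    exact mem_biUnion (Fintype.mem_piFinset.2 hρS) fun i _ => hρA i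
  rw [← Measure.restrict_eq_self_of_ae_mem hcover', integral_biUnion_finset]
  · simp_rw [Measure.restrict_pi_pi]
  · exact fun ρ _ => MeasurableSet.univ_pi fun i => hA (ρ i)
  · intro ρ _ ρ' _ hne
    obtain ⟨i, hi⟩ := Function.ne_iff.1 hne
    exact disjoint_univ_pi.2 ⟨i, hdisj hi⟩
  · exact fun _ _ => hf.integrableOn

theorem intCast_lt_two_zpow (n : ℤ) : (n : ℝ) < 2 ^ n := by
  rcases le_or_gt 0 n with hn | hn
  · lift n to ℕ using hn
    exact_mod_cast Nat.lt_two_pow_self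
  · exact (Int.cast_lt_zero.2 hn).trans (zpow_pos two_pos n)

theorem rpow_le_self_of_one_le_rpow {x ε : ℝ} (hx : 0 ≤ x) (hε₀ : 0 < ε) (hε₁ : ε ≤ 1)
    (h : 1 ≤ x ^ ε) : x ^ ε ≤ x := by
  refine rpow_le_self_of_one_le ?_ hε₁
  by_contra! hx₁
  exact (rpow_lt_one hx hx₁ hε₀).not_ge h

theorem inv_le_rpow_of_inv_le {a x ε : ℝ} (ha : 1 ≤ a) (hx : a⁻¹ ≤ x) (hε₀ : 0 ≤ ε)
    (hε₁ : ε ≤ 1) : a⁻¹ ≤ x ^ ε := by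
  rcases le_total x 1 with h | h
  · exact hx.trans (self_le_rpow_of_le_one ((inv_pos.2 (by linarith)).le.trans hx) h hε₁)
  · exact (inv_le_one_of_one_le₀ ha).trans (one_le_rpow h hε₀)

theorem prod_mem_Icc_inv_pow {ι : Type*} [Fintype ι] {a : ℝ} (ha : 0 < a) {s : ι → ℝ}
    (hs : ∀ j, s j ∈ Icc a⁻¹ a) : ∏ j, s j ∈ Icc (a ^ Fintype.card ι)⁻¹ (a ^ Fintype.card ι) := by
  constructor
  · calc (a ^ Fintype.card ι)⁻¹ = ∏ _j : ι, a⁻¹ := by simp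
      _ ≤ ∏ j, s j := Finset.prod_le_prod (fun _ _ => by positivity) fun j _ => (hs j).1
  · calc ∏ j, s j ≤ ∏ _j : ι, a := Finset.prod_le_prod
          (fun j _ => (inv_pos.2 ha).le.trans (hs j).1) fun j _ => (hs j).2
      _ = a ^ Fintype.card ι := by simp

namespace SumProduct

def strip (θ a σ : ℝ) : Set ℂ := {z : ℂ | |(Complex.exp (θ * Complex.I) * z).re - a| ≤ σ}

theorem measurableSet_strip (θ a σ : ℝ) : MeasurableSet (strip θ a σ) :=
  measurableSet_le (by fun_prop) measurable_const

theorem preimage_inv_mul_strip {s : ℝ} (hs : 0 < s) (θ a σ : ℝ) :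
    (fun z : ℂ => (s : ℂ)⁻¹ * z) ⁻¹' strip θ a σ = strip θ (a * s) (σ * s) := by
  ext z
  have hre : (Complex.exp (θ * Complex.I) * ((s : ℂ)⁻¹ * z)).re
      = s⁻¹ * (Complex.exp (θ * Complex.I) * z).re := by
    rw [mul_left_comm, ← Complex.ofReal_inv, Complex.re_ofReal_mul]
  have habs (x : ℝ) : |s⁻¹ * x - a| = s⁻¹ * |x - a * s| := by
    rw [← abs_of_pos (inv_pos.2 hs), ← abs_mul, abs_of_pos (inv_pos.2 hs)]
    congr 1
    field_simp
  simp only [strip, mem_preimage, mem_ofPred_eq, hre, habs, inv_mul_le_iff₀ hs, mul_comm σ s]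

def NonConcentrated (μ : Measure ℂ) (γ C σ₀ σ₁ : ℝ) : Prop :=
  ∀ σ : ℝ, σ₀ ≤ σ → σ ≤ σ₁ → ∀ a θ : ℝ, (μ (strip θ a σ)).toReal ≤ C * σ ^ γ

namespace NonConcentrated

variable {μ : Measure ℂ} {γ C σ₀ σ₁ : ℝ}

theorem mono (h : NonConcentrated μ γ C σ₀ σ₁) {C' σ₀' σ₁' : ℝ} (hC : C ≤ C')
    (h₀ : σ₀ ≤ σ₀') (h₁ : σ₁' ≤ σ₁) (hσ₀ : 0 ≤ σ₀) : NonConcentrated μ γ C' σ₀' σ₁' :=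
  fun σ hσ₀' hσ₁' a θ => (h σ (h₀.trans hσ₀') (hσ₁'.trans h₁) a θ).trans
    (mul_le_mul_of_nonneg_right hC (rpow_nonneg (hσ₀.trans (h₀.trans hσ₀')) γ))

theorem restrict [IsFiniteMeasure μ] (h : NonConcentrated μ γ C σ₀ σ₁) (A : Set ℂ) :
    NonConcentrated (μ.restrict A) γ C σ₀ σ₁ :=
  fun σ h₀ h₁ a θ => (ENNReal.toReal_mono (measure_ne_top μ _)
    (Measure.restrict_apply_le A _)).trans (h σ h₀ h₁ a θ)

theorem smul (h : NonConcentrated μ γ C σ₀ σ₁) (c : ℝ≥0) :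
    NonConcentrated (c • μ) γ (c * C) σ₀ σ₁ := fun σ h₀ h₁ a θ => by
  simp only [Measure.smul_apply, ENNReal.smul_def, smul_eq_mul, ENNReal.toReal_mul,
    ENNReal.coe_toReal, mul_assoc]
  exact mul_le_mul_of_nonneg_left (h σ h₀ h₁ a θ) c.coe_nonneg

theorem map_inv_mul (h : NonConcentrated μ γ C σ₀ σ₁) (hσ₀ : 0 ≤ σ₀) {s : ℝ} (hs : 0 < s) :
    NonConcentrated (μ.map fun z => (s : ℂ)⁻¹ * z) γ (C * s ^ γ) (σ₀ / s) (σ₁ / s) :=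
  fun σ h₀ h₁ a θ => by
    have hσ : 0 ≤ σ := (div_nonneg hσ₀ hs.le).trans h₀
    rw [Measure.map_apply (by fun_prop) (measurableSet_strip θ a σ), preimage_inv_mul_strip hs]
    calc _ ≤ C * (σ * s) ^ γ := h _ ((div_le_iff₀ hs).1 h₀) ((le_div_iff₀ hs).1 h₁) _ _
      _ = C * s ^ γ * σ ^ γ := by rw [mul_rpow hσ hs.le]; ring

end NonConcentrated

section oscIntegral

variable {ι : Type*} [Fintype ι]

noncomputable def oscIntegral (η : ℂ) (μ : ι → Measure ℂ) : ℂ :=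
  ∫ z : ι → ℂ, Complex.exp (2 * π * ((η * ∏ j, z j).re) * Complex.I) ∂(Measure.pi μ)

theorem oscIntegral_map_mul (η : ℂ) (c : ι → ℂ) (μ : ι → Measure ℂ)
    [∀ j, IsFiniteMeasure (μ j)] :
    oscIntegral η (fun j => (μ j).map (c j * ·)) = oscIntegral (η * ∏ j, c j) μ := by
  have hmp := measurePreserving_pi μ (fun j => (μ j).map (c j * ·))
    fun j => (measurable_const_mul (c j)).measurePreserving (μ j)
  rw [oscIntegral, ← hmp.map_eq, integral_map hmp.aemeasurable (by fun_prop)]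
  simp only [oscIntegral, Finset.prod_mul_distrib, mul_assoc]

theorem oscIntegral_smul (η : ℂ) (c : ℝ≥0) (μ : ι → Measure ℂ) [∀ j, SigmaFinite (μ j)] :
    oscIntegral η (fun j => c • μ j) = c ^ Fintype.card ι • oscIntegral η μ := by
  rw [oscIntegral, Measure.pi_smul, integral_smul_nnreal_measure, oscIntegral]

theorem oscIntegral_eq_sum_restrict [DecidableEq ι] {κ : Type*} (η : ℂ) {μ : ι → Measure ℂ}
    [∀ j, IsFiniteMeasure (μ j)] {S : Finset κ} {A : κ → Set ℂ} (hA : ∀ t, MeasurableSet (A t))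
    (hdisj : Pairwise (Disjoint on A)) (hcover : ∀ j, ∀ᵐ z ∂μ j, ∃ t ∈ S, z ∈ A t) :
    oscIntegral η μ =
      ∑ ρ ∈ Fintype.piFinset fun _ => S, oscIntegral η fun j => (μ j).restrict (A (ρ j)) :=
  integral_pi_eq_sum_restrict hA hdisj hcover <|
    (integrable_const (1 : ℝ)).mono' (by fun_prop) <| .of_forall fun z => by
      norm_cast
      rw [Complex.norm_exp_ofReal_mul_I]

end oscIntegral

section dyadicAnnulus

variable {E : Type*}

def dyadicAnnulus [Norm E] (r : ℤ) : Set E := {z | (2 : ℝ) ^ (r - 1) < ‖z‖ ∧ ‖z‖ ≤ 2 ^ r}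

noncomputable def dyadicIndices (R : ℝ) : Finset ℤ := Finset.Icc (Int.clog 2 R⁻¹) (Int.clog 2 R)

theorem measurableSet_dyadicAnnulus [NormedAddCommGroup E] [MeasurableSpace E]
    [OpensMeasurableSpace E] (r : ℤ) : MeasurableSet (dyadicAnnulus r : Set E) :=
  (measurableSet_lt measurable_const measurable_norm).inter
    (measurableSet_le measurable_norm measurable_const)

theorem pairwise_disjoint_dyadicAnnulus [Norm E] :
    Pairwise (Disjoint on (dyadicAnnulus : ℤ → Set E)) := by
  suffices ∀ r r' : ℤ, r < r' → Disjoint (dyadicAnnulus r : Set E) (dyadicAnnulus r') from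
    fun r r' hne => hne.lt_or_gt.elim (this r r') fun h => (this r' r h).symm
  intro r r' hlt
  refine disjoint_left.2 fun z ⟨_, hz⟩ ⟨hz', _⟩ => ?_
  have : (2 : ℝ) ^ r ≤ 2 ^ (r' - 1) := zpow_le_zpow_right₀ one_le_two (by omega)
  linarith

theorem mem_dyadicAnnulus_clog [Norm E] {z : E} (hz : 0 < ‖z‖) :
    z ∈ dyadicAnnulus (Int.clog 2 ‖z‖) := by
  have h₁ := Int.zpow_pred_clog_lt_self (b := 2) one_lt_two hz
  have h₂ := Int.self_le_zpow_clog (b := 2) one_lt_two ‖z‖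
  push_cast at h₁ h₂
  exact ⟨h₁, h₂⟩

theorem ae_restrict_dyadicAnnulus [NormedAddCommGroup E] [MeasurableSpace E]
    [OpensMeasurableSpace E] (μ : Measure E) (r : ℤ) :
    ∀ᵐ z ∂μ.restrict (dyadicAnnulus r), (2 : ℝ) ^ r / 2 ≤ ‖z‖ ∧ ‖z‖ ≤ 2 * 2 ^ r := by
  refine (ae_restrict_mem (measurableSet_dyadicAnnulus r)).mono fun z ⟨hz₁, hz₂⟩ => ?_
  rw [zpow_sub_one₀ two_ne_zero] at hz₁
  constructor <;> linarith [zpow_pos (two_pos : (0 : ℝ) < 2) r]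

theorem exists_mem_dyadicIndices_mem_dyadicAnnulus [Norm E] {R : ℝ} {z : E} (hR : 0 < R)
    (h₁ : R⁻¹ ≤ ‖z‖) (h₂ : ‖z‖ ≤ R) : ∃ r ∈ dyadicIndices R, z ∈ dyadicAnnulus r :=
  have hz : 0 < ‖z‖ := (inv_pos.2 hR).trans_le h₁
  ⟨_, Finset.mem_Icc.2 ⟨Int.clog_mono_right (inv_pos.2 hR) h₁, Int.clog_mono_right hz h₂⟩,
    mem_dyadicAnnulus_clog hz⟩

end dyadicAnnulus

theorem two_zpow_mem_Icc_of_mem_dyadicIndices {R : ℝ} (hR : 0 < R) {r : ℤ}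
    (hr : r ∈ dyadicIndices R) : (2 : ℝ) ^ r ∈ Icc (2 * R)⁻¹ (2 * R) := by
  obtain ⟨hr₁, hr₂⟩ := Finset.mem_Icc.1 hr
  have h₁ := Int.self_le_zpow_clog (b := 2) one_lt_two R⁻¹
  have h₂ := Int.zpow_pred_clog_lt_self (b := 2) one_lt_two hR
  push_cast at h₁ h₂
  constructor
  · calc (2 * R)⁻¹ ≤ R⁻¹ := inv_anti₀ hR (by linarith)
      _ ≤ 2 ^ Int.clog 2 R⁻¹ := h₁
      _ ≤ 2 ^ r := zpow_le_zpow_right₀ one_le_two hr₁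
  · calc (2 : ℝ) ^ r ≤ 2 ^ Int.clog 2 R := zpow_le_zpow_right₀ one_le_two hr₂
      _ = 2 * 2 ^ (Int.clog 2 R - 1) := by rw [zpow_sub_one₀ two_ne_zero]; ring
      _ ≤ 2 * R := by linarith

theorem card_dyadicIndices_le {R : ℝ} (hR : 1 ≤ R) : ((dyadicIndices R).card : ℝ) ≤ 4 * R := by
  have hR₀ : 0 < R := by linarith
  have hc : (Int.clog 2 R : ℝ) < 2 * R := by
    have h := Int.zpow_pred_clog_lt_self (b := 2) one_lt_two hR₀
    push_cast at h
    calc (Int.clog 2 R : ℝ) < 2 ^ Int.clog 2 R := intCast_lt_two_zpow _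
      _ = 2 * 2 ^ (Int.clog 2 R - 1) := by rw [zpow_sub_one₀ two_ne_zero]; ring
      _ < 2 * R := by linarith
  have hl : (Int.log 2 R : ℝ) < R := by
    have h := Int.zpow_log_le_self (b := 2) one_lt_two hR₀
    push_cast at h
    exact (intCast_lt_two_zpow _).trans_le h
  rw [dyadicIndices, Int.card_Icc, Int.clog_inv, ← Int.cast_natCast, Int.toNat_eq_max]
  push_cast
  exact max_le (by linarith) (by linarith)

theorem norm_oscIntegral_le_of_norm_restrict_dyadicAnnulus_le {ι : Type*} [Fintype ι] {R B : ℝ}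
    (hR : 1 ≤ R) {η : ℂ} {μ : ι → Measure ℂ} [∀ j, IsFiniteMeasure (μ j)]
    (hsupp : ∀ j, ∀ᵐ z ∂μ j, R⁻¹ ≤ ‖z‖ ∧ ‖z‖ ≤ R)
    (hbox : ∀ ρ : ι → ℤ, (∀ j, (2 : ℝ) ^ ρ j ∈ Icc (2 * R)⁻¹ (2 * R)) →
      ‖oscIntegral η fun j => (μ j).restrict (dyadicAnnulus (ρ j))‖ ≤ B) :
    ‖oscIntegral η μ‖ ≤ (4 * R) ^ Fintype.card ι * B := by
  classical
  have hR₀ : 0 < R := by linarith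
  have hB : 0 ≤ B := (norm_nonneg _).trans <| hbox 0 fun _ => by
    simp only [Pi.zero_apply, zpow_zero, mem_Icc]
    exact ⟨inv_le_one_of_one_le₀ (by linarith), by linarith⟩
  rw [oscIntegral_eq_sum_restrict η measurableSet_dyadicAnnulus pairwise_disjoint_dyadicAnnulus
    fun j => (hsupp j).mono fun z hz =>
      exists_mem_dyadicIndices_mem_dyadicAnnulus hR₀ hz.1 hz.2]
  calc _ ≤ ∑ ρ ∈ Fintype.piFinset fun _ => dyadicIndices R,
        ‖oscIntegral η fun j => (μ j).restrict (dyadicAnnulus (ρ j))‖ := norm_sum_le _ _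
    _ ≤ ∑ _ρ ∈ Fintype.piFinset fun _ => dyadicIndices R, B :=
        Finset.sum_le_sum fun ρ hρ => hbox ρ fun j =>
          two_zpow_mem_Icc_of_mem_dyadicIndices hR₀ (Fintype.mem_piFinset.1 hρ j)
    _ = ((dyadicIndices R).card : ℝ) ^ Fintype.card ι * B := by simp
    _ ≤ (4 * R) ^ Fintype.card ι * B := by gcongr; exact card_dyadicIndices_le hR

def SumProductEstimate (k : ℕ) (γ C₀ C₁ ε : ℝ) : Prop :=
  ∀ η : ℂ, 1 < ‖η‖ → ∀ lam : Fin k → Measure ℂ,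
    (∀ j, ∀ᵐ z ∂lam j, C₀⁻¹ ≤ ‖z‖ ∧ ‖z‖ ≤ C₀) →
    (∀ j, lam j univ ≤ ENNReal.ofReal C₀) →
    (∀ j, NonConcentrated (lam j) γ C₀ (C₀ * ‖η‖⁻¹) (C₀⁻¹ * ‖η‖ ^ (-ε))) →
    ‖oscIntegral η lam‖ ≤ C₁ * ‖η‖ ^ (-ε)

noncomputable def rescale (R s : ℝ) (ν : Measure ℂ) : Measure ℂ :=
  R.toNNReal⁻¹ • ν.map fun z => (s : ℂ)⁻¹ * z

theorem ae_rescale {R s : ℝ} {ν : Measure ℂ} (hs : 0 < s)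
    (h : ∀ᵐ z ∂ν, s / 2 ≤ ‖z‖ ∧ ‖z‖ ≤ 2 * s) : ∀ᵐ w ∂rescale R s ν, 2⁻¹ ≤ ‖w‖ ∧ ‖w‖ ≤ 2 := by
  refine Measure.ae_smul_measure ((ae_map_iff (p := fun w => 2⁻¹ ≤ ‖w‖ ∧ ‖w‖ ≤ 2) (by fun_prop)
    ((measurableSet_le measurable_const measurable_norm).inter
      (measurableSet_le measurable_norm measurable_const))).2 (h.mono fun z hz => ?_)) _
  rw [norm_mul, norm_inv, Complex.norm_real, Real.norm_eq_abs, abs_of_pos hs,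
    le_inv_mul_iff₀ hs, inv_mul_le_iff₀ hs]
  constructor <;> linarith

theorem rescale_apply_univ_le {R s : ℝ} {ν : Measure ℂ} (hR : 0 < R)
    (h : ν univ ≤ ENNReal.ofReal R) : rescale R s ν univ ≤ 1 :=
  calc rescale R s ν univ = R.toNNReal⁻¹ * ν univ := by
        simp [rescale, Measure.map_apply (by fun_prop : Measurable fun z => (s : ℂ)⁻¹ * z)]
    _ ≤ R.toNNReal⁻¹ * ENNReal.ofReal R := by gcongr
    _ = 1 := by
        rw [ENNReal.ofReal, ← ENNReal.coe_mul, inv_mul_cancel₀ (by simpa using hR),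
          ENNReal.coe_one]

theorem NonConcentrated.rescale {ν : Measure ℂ} {γ σ₀ σ₁ R s : ℝ}
    (h : NonConcentrated ν γ 1 σ₀ σ₁) (hσ₀ : 0 ≤ σ₀) (hR : 0 ≤ R) (hs : 0 < s) :
    NonConcentrated (rescale R s ν) γ (R⁻¹ * s ^ γ) (σ₀ / s) (σ₁ / s) := by
  have := (h.map_inv_mul hσ₀ hs).smul R.toNNReal⁻¹
  rwa [NNReal.coe_inv, Real.coe_toNNReal R hR, one_mul] at this

theorem oscIntegral_rescale {ι : Type*} [Fintype ι] (η : ℂ) (R : ℝ) (hR : 0 ≤ R) {s : ι → ℝ}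
    (hs : ∀ j, s j ≠ 0) (ν : ι → Measure ℂ) [∀ j, IsFiniteMeasure (ν j)] :
    oscIntegral (η * ∏ j, (s j : ℂ)) (fun j => rescale R (s j) (ν j)) =
      (R⁻¹ ^ Fintype.card ι : ℝ) • oscIntegral η ν := by
  unfold rescale
  rw [oscIntegral_smul, NNReal.smul_def, NNReal.coe_pow, NNReal.coe_inv,
    Real.coe_toNNReal R hR, oscIntegral_map_mul, mul_assoc, ← Finset.prod_mul_distrib]
  simp [mul_inv_cancel₀ (Complex.ofReal_ne_zero.2 (hs _))]

theorem SumProductEstimate.norm_oscIntegral_le_of_scales {k : ℕ} {γ C₁ ε : ℝ}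
    (hSP : SumProductEstimate k γ 2 C₁ ε) (hγ₀ : 0 ≤ γ) (hγ₁ : γ ≤ 1) {R : ℝ} (hR : 1 ≤ R)
    {s : Fin k → ℝ} (hs : ∀ j, s j ∈ Icc (2 * R)⁻¹ (2 * R)) {η : ℂ} (hY : 1 < ‖η‖ * ∏ j, s j)
    {ν : Fin k → Measure ℂ} (hsupp : ∀ j, ∀ᵐ z ∂ν j, s j / 2 ≤ ‖z‖ ∧ ‖z‖ ≤ 2 * s j)
    (hmass : ∀ j, ν j univ ≤ ENNReal.ofReal R)
    (hnc : ∀ j, NonConcentrated (ν j) γ 1 (R * (‖η‖ * ∏ j, s j))⁻¹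
      (R * (‖η‖ * ∏ j, s j) ^ (-ε))) :
    ‖oscIntegral η ν‖ ≤ R ^ k * (C₁ * (‖η‖ * ∏ j, s j) ^ (-ε)) := by
  have : ∀ j, IsFiniteMeasure (ν j) := fun j => ⟨(hmass j).trans_lt ENNReal.ofReal_lt_top⟩
  have hR₀ : 0 < R := by linarith
  have hs₀ : ∀ j, 0 < s j := fun j => (inv_pos.2 (by linarith)).trans_le (hs j).1
  set Y := ‖η‖ * ∏ j, s j
  have hY₀ : 0 < Y := by linarith
  set η' := η * ∏ j, (s j : ℂ)
  have hη' : ‖η'‖ = Y := by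
    simp only [η', Y, norm_mul, norm_prod, Complex.norm_real, Real.norm_eq_abs,
      abs_of_pos (hs₀ _)]
  have hnc' : ∀ j, NonConcentrated (rescale R (s j) (ν j)) γ 2 (2 * ‖η'‖⁻¹)
      (2⁻¹ * ‖η'‖ ^ (-ε)) := fun j => by
    obtain ⟨hs₁, hs₂⟩ := hs j
    rw [hη']
    refine ((hnc j).rescale (by positivity) hR₀.le (hs₀ j)).mono ?_ ?_ ?_
      (div_nonneg (inv_pos.2 (mul_pos hR₀ hY₀)).le (hs₀ j).le)
    · calc R⁻¹ * s j ^ γ ≤ R⁻¹ * (2 * R) := by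
            gcongr
            exact (rpow_le_rpow (hs₀ j).le hs₂ hγ₀).trans
              (rpow_le_self_of_one_le (by linarith) hγ₁)
        _ = 2 := by field_simp
    · rw [inv_le_iff_one_le_mul₀ (by positivity)] at hs₁
      field_simp
      rw [div_le_iff₀ (hs₀ j)]
      linarith
    · rw [le_div_iff₀ (hs₀ j)]
      nlinarith [rpow_pos_of_pos hY₀ (-ε)]
  calc ‖oscIntegral η ν‖
      = R ^ k * ‖oscIntegral η' fun j => rescale R (s j) (ν j)‖ := by
        rw [oscIntegral_rescale η R hR₀.le (fun j => (hs₀ j).ne'), Fintype.card_fin, norm_smul,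
          Real.norm_of_nonneg (by positivity), inv_pow, ← mul_assoc,
          mul_inv_cancel₀ (by positivity), one_mul]
    _ ≤ R ^ k * (C₁ * Y ^ (-ε)) := by
        rw [← hη']
        gcongr
        exact hSP η' (hη' ▸ hY) _ (fun j => ae_rescale (hs₀ j) (hsupp j))
          (fun j => (rescale_apply_univ_le hR₀ (hmass j)).trans
            (ENNReal.one_le_ofReal.2 one_le_two)) hnc'

/-- With `X = ‖η‖`, `u = ‖η‖ ^ ε₁` and `P = ∏ 2 ^ r_j`, the rescaled frequency `X * P` is still
large. -/
theorem pow_le_rpow_mul_of_rpow_eq {k : ℕ} {ε u X P : ℝ} (hε₀ : 0 < ε) (hε₁ : ε ≤ 1)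
    (hu : 1 ≤ u) (hX : 0 ≤ X) (hXu : X ^ ε = u ^ (4 * k + 2)) (hP : (u ^ (2 * k))⁻¹ ≤ P) :
    u ^ (2 * k + 2) ≤ (X * P) ^ ε := by
  have hP₀ : 0 < P := (inv_pos.2 (by positivity)).trans_le hP
  rw [mul_rpow hX hP₀.le, hXu,
    show u ^ (2 * k + 2) = u ^ (4 * k + 2) * (u ^ (2 * k))⁻¹ by field_simp; ring]
  gcongr
  exact inv_le_rpow_of_inv_le (one_le_pow₀ hu) hP hε₀.le hε₁

theorem SumProductEstimate.norm_oscIntegral_restrict_dyadicAnnulus_le {k : ℕ} {γ C₁ ε : ℝ}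
    (hSP : SumProductEstimate k γ 2 C₁ ε) (hC₁ : 0 ≤ C₁) (hγ₀ : 0 ≤ γ) (hγ₁ : γ ≤ 1)
    (hε₀ : 0 < ε) (hε₁ : ε ≤ 1) {η : ℂ} {u R : ℝ} (hu : 2 ≤ u) (hR : 1 ≤ R) (hRu : R ≤ u)
    (hηu : ‖η‖ ^ ε = u ^ (4 * k + 2)) {lam : Fin k → Measure ℂ}
    (hmass : ∀ j, lam j univ ≤ ENNReal.ofReal R)
    (hnc : ∀ j, NonConcentrated (lam j) γ 1 (‖η‖ ^ (-2 : ℝ)) u⁻¹)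
    {ρ : Fin k → ℤ} (hρ : ∀ j, (2 : ℝ) ^ ρ j ∈ Icc (2 * R)⁻¹ (2 * R)) :
    ‖oscIntegral η fun j => (lam j).restrict (dyadicAnnulus (ρ j))‖ ≤ C₁ * (u ^ (k + 2))⁻¹ := by
  have : ∀ j, IsFiniteMeasure (lam j) := fun j => ⟨(hmass j).trans_lt ENNReal.ofReal_lt_top⟩
  set X := ‖η‖
  set P := ∏ j, (2 : ℝ) ^ ρ j
  have hu₀ : 0 < u := by linarith
  have h2R : 2 * R ≤ u ^ 2 := by nlinarith
  have hP : P ∈ Icc (u ^ (2 * k))⁻¹ (u ^ (2 * k)) := by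
    rw [pow_mul, ← Fintype.card_fin k]
    exact prod_mem_Icc_inv_pow (by positivity) fun j =>
      ⟨(inv_anti₀ (by positivity) h2R).trans (hρ j).1, (hρ j).2.trans h2R⟩
  have hP₀ : 0 < P := by positivity
  have hX : u ^ (4 * k + 2) ≤ X :=
    hηu ▸ rpow_le_self_of_one_le_rpow (norm_nonneg _) hε₀ hε₁ (hηu ▸ one_le_pow₀ (by linarith))
  have hYε := pow_le_rpow_mul_of_rpow_eq hε₀ hε₁ (by linarith) (norm_nonneg η) hηu hP.1
  have hY : 1 < X * P := by
    by_contra! h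
    have h₁ : (X * P) ^ ε ≤ 1 := rpow_le_one (by positivity) h hε₀.le
    have h₂ : 1 < u ^ (2 * k + 2) := one_lt_pow₀ (by linarith) (by omega)
    linarith
  have hRY : R * (X * P) ≤ X ^ 2 := by
    calc R * (X * P) ≤ u * (X * u ^ (2 * k)) := by gcongr; exact hP.2
      _ = X * u ^ (2 * k + 1) := by ring
      _ ≤ X * X := by
          gcongr
          exact (pow_le_pow_right₀ (by linarith) (by omega)).trans hX
      _ = X ^ 2 := (sq X).symm
  have hXP : 0 < X * P := by linarith
  refine (hSP.norm_oscIntegral_le_of_scales hγ₀ hγ₁ hR hρ hY (fun j => ?_) (fun j => ?_)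
    (fun j => ?_)).trans ?_
  · exact ae_restrict_dyadicAnnulus _ _
  · exact (Measure.restrict_apply_le _ _).trans (hmass j)
  · refine ((hnc j).restrict _).mono le_rfl ?_ ?_ (by positivity)
    · rw [rpow_neg (norm_nonneg _), rpow_two]
      exact inv_anti₀ (by positivity) hRY
    · rw [rpow_neg hXP.le]
      calc R * ((X * P) ^ ε)⁻¹ ≤ u * (u ^ (2 * k + 2))⁻¹ := by gcongr
        _ = (u ^ (2 * k + 1))⁻¹ := by field_simp; ring
        _ ≤ u⁻¹ := inv_anti₀ hu₀ (le_self_pow₀ (by linarith) (by omega))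
  · rw [rpow_neg hXP.le, mul_left_comm]
    gcongr
    calc R ^ k * ((X * P) ^ ε)⁻¹ ≤ u ^ k * (u ^ (2 * k + 2))⁻¹ := by gcongr
      _ = (u ^ (k + 2))⁻¹ := by field_simp; ring

end SumProduct

open SumProduct in
/-- Sum–product estimate with polynomially growing constants (Theorem 5.2): fix `0 < γ < 1`.
Assuming the Bourgain–Li complex sum–product theorem (hypothesis `hBL`), there exist `ε₁ > 0`
and `k ∈ ℕ` such that for all `η ∈ ℂ` with `|η|` large, all `1 < R < |η|^{ε₁}`, and all Borel
measures `λ₁, …, λ_k` supported on the annulus `{R⁻¹ ≤ |z| ≤ R}` with total mass `≤ R`,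
each satisfying the projective non-concentration property
`λ_j{z : |Re(e^{iθ}z) − a| ≤ σ} ≤ σ^γ` for `σ ∈ [|η|^{-2}, |η|^{-ε₁}]`, one has
`|∫ exp(2πi Re(η z₁⋯z_k)) dλ₁⋯dλ_k| ≤ c |η|^{-ε₁}` with `c` depending only on `γ`. -/
theorem stmt_16 (γ : ℝ) (hγ0 : 0 < γ) (hγ1 : γ < 1)
    -- Bourgain–Li sum–product theorem, as a black box:
    (hBL : ∀ γ' : ℝ, 0 < γ' → ∃ ε₂ : ℝ, 0 < ε₂ ∧ ε₂ < 1 ∧ ∃ k : ℕ, 0 < k ∧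
      ∀ C₀ : ℝ, 1 < C₀ → ∃ C₁ : ℝ, 0 < C₁ ∧ ∀ η : ℂ, 1 < ‖η‖ →
        ∀ lam : Fin k → Measure ℂ,
          (∀ j, lam j {z : ℂ | ¬(C₀⁻¹ ≤ ‖z‖ ∧ ‖z‖ ≤ C₀)} = 0) →
          (∀ j, lam j Set.univ ≤ ENNReal.ofReal C₀) →
          (∀ j, ∀ σ : ℝ, C₀ * ‖η‖⁻¹ ≤ σ → σ ≤ C₀⁻¹ * ‖η‖ ^ (-ε₂) → ∀ a θ : ℝ,
            (lam j {z : ℂ | |(Complex.exp (θ * Complex.I) * z).re - a| ≤ σ}).toReal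
              ≤ C₀ * σ ^ γ') →
          ‖∫ z : Fin k → ℂ,
              Complex.exp (2 * π * ((η * ∏ j, z j).re) * Complex.I) ∂(Measure.pi lam)‖
            ≤ C₁ * ‖η‖ ^ (-ε₂)) :
    ∃ ε₁ : ℝ, 0 < ε₁ ∧ ∃ k : ℕ, 0 < k ∧ ∃ c : ℝ, 0 < c ∧ ∃ M : ℝ,
      ∀ η : ℂ, M ≤ ‖η‖ → ∀ R : ℝ, 1 < R → R < ‖η‖ ^ ε₁ →
        ∀ lam : Fin k → Measure ℂ,
          (∀ j, lam j {z : ℂ | ¬(R⁻¹ ≤ ‖z‖ ∧ ‖z‖ ≤ R)} = 0) →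
          (∀ j, lam j Set.univ ≤ ENNReal.ofReal R) →
          (∀ j, ∀ σ : ℝ, ‖η‖ ^ (-(2:ℝ)) ≤ σ → σ ≤ ‖η‖ ^ (-ε₁) → ∀ a θ : ℝ,
            (lam j {z : ℂ | |(Complex.exp (θ * Complex.I) * z).re - a| ≤ σ}).toReal
              ≤ σ ^ γ) →
          ‖∫ z : Fin k → ℂ,
              Complex.exp (2 * π * ((η * ∏ j, z j).re) * Complex.I) ∂(Measure.pi lam)‖
            ≤ c * ‖η‖ ^ (-ε₁) := by
  obtain ⟨ε₂, hε₂, hε₂1, k, hk, hBLk⟩ := hBL γ hγ0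
  obtain ⟨C₁, hC₁, hSP⟩ : ∃ C₁, 0 < C₁ ∧ SumProductEstimate k γ 2 C₁ ε₂ := hBLk 2 one_lt_two
  set ε₁ := ε₂ / (4 * k + 2)
  have hε₁ : 0 < ε₁ := by positivity
  refine ⟨ε₁, hε₁, k, hk, 4 ^ k * C₁, by positivity, 2 ^ ε₁⁻¹, ?_⟩
  intro η hη R hR hRη lam hsupp hmass hnc
  have : ∀ j, IsFiniteMeasure (lam j) := fun j => ⟨(hmass j).trans_lt ENNReal.ofReal_lt_top⟩
  set u := ‖η‖ ^ ε₁
  have hu : 2 ≤ u := calc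
    (2 : ℝ) = (2 ^ ε₁⁻¹) ^ ε₁ := (rpow_inv_rpow zero_le_two hε₁.ne').symm
    _ ≤ u := rpow_le_rpow (by positivity) hη hε₁.le
  have hηu : ‖η‖ ^ ε₂ = u ^ (4 * k + 2) := by
    rw [← rpow_natCast, ← rpow_mul (norm_nonneg _)]
    congr 1
    push_cast
    exact (div_mul_cancel₀ ε₂ (by positivity)).symm
  have hnc' : ∀ j, NonConcentrated (lam j) γ 1 (‖η‖ ^ (-2 : ℝ)) u⁻¹ := fun j σ h₀ h₁ a θ => by
    rw [one_mul]
    exact hnc j σ h₀ (by rwa [rpow_neg (norm_nonneg _)]) a θ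
  have hbox := fun ρ hρ => hSP.norm_oscIntegral_restrict_dyadicAnnulus_le hC₁.le hγ0.le hγ1.le
    hε₂ hε₂1.le hu hR.le hRη.le hηu hmass hnc' (ρ := ρ) hρ
  show ‖oscIntegral η lam‖ ≤ _
  rw [rpow_neg (norm_nonneg _)]
  calc ‖oscIntegral η lam‖ ≤ (4 * R) ^ k * (C₁ * (u ^ (k + 2))⁻¹) := by
        simpa using norm_oscIntegral_le_of_norm_restrict_dyadicAnnulus_le hR.le
          (fun j => ae_iff.2 (hsupp j)) hbox
    _ ≤ (4 * u) ^ k * (C₁ * (u ^ (k + 2))⁻¹) := by gcongr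
    _ = 4 ^ k * C₁ * (u ^ 2)⁻¹ := by field_simp; ring
    _ ≤ 4 ^ k * C₁ * u⁻¹ := by gcongr; exact le_self_pow₀ (by linarith) two_ne_zero
end
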